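/- Let P be a graded poset and G a copresheaf of abelian groups on P such that (P,G) admits a cellular form. Let Λ be a P-graded ℤ-module equipped with maps ∂ : Λ_x → ⊕_{y⋖x} Λ_y satisfying ∂∂ = 0 and: (1) Λ_{x₀} = G(x₀) for every rank-0 element x₀; (2) for every rank-1 element x₁, Λ_{x₁} = ker(⊕_{y<x₁} G(y) → G(x₁)) and ∂ on Λ_{x₁} is this inclusion into ⊕_{y<x₁} G(y) = ⊕_{y<x₁} Λ_y; (3) for every x with r(x) > 1, the sequence 0 → Λ_x → ⊕_{y⋖x} Λ_y → ⊕_{y<x, r(y)=r(x)−2} Λ_y (both maps given by ∂) is exact. Then Λ is a cellular form of (P,G). -/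

import Mathlib

open CategoryTheory Classical

/-- A rank function making `P` a graded poset: minimal elements have rank `0`, the rank
increases by `1` along covering relations, and is strictly monotone. -/
def IsGrading (P : Type) [PartialOrder P] (r : P → ℕ) : Prop :=
  (∀ x : P, IsMin x → r x = 0) ∧ (∀ x y : P, x ⋖ y → r y = r x + 1) ∧
    ∀ x y : P, x < y → r x < r y

/-- A cellular form of a pair `(P, G)` where `P` is a poset graded by `r` and `G` is a
copresheaf of abelian groups on `P` (a functor `P ⥤ AddCommGrp`).

It consists of a `P`-graded differential `ℤ`-module `Λ = ⊕_{x∈P} Λ_x`, the differential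
being recorded by its components `δ x y : Λ_x →+ Λ_y`, together with the maps
`e x y : Λ_y →+ G(x)` (for `y ≤ x` of rank `0`) realising the isomorphism of copresheaves
`(x ↦ H₀(Λ_{≤x})) ≅ G`, such that:

* `∂` maps `Λ_x` into `⊕_{y⋖x} Λ_y` (fields `delta_support`, `delta_fin`) and `∂∂ = 0`
  (field `delta_delta`); hence each `Λ_{≤x} = ⊕_{y≤x} Λ_y` is a chain complex graded by
  rank;
* `Λ_{≤x}` has trivial homology in all positive degrees (field `exact_pos`: every cycle
  of positive degree supported below `x` is a boundary of a chain supported below `x`);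
* the copresheaf `x ↦ H₀(Λ_{≤x})` (whose extension maps are induced by the inclusions
  `Λ_{≤x} ↪ Λ_{≤x'}`) is isomorphic to `G` via the maps induced by `e` (fields
  `e_natural`, `e_surj`, `e_ker`: `e` is compatible with the extension maps of `G`, and
  the induced map `H₀(Λ_{≤x}) → G(x)` is surjective and injective — an element of degree
  `0` maps to `0` iff it is a boundary). -/
structure CellularForm (P : Type) [PartialOrder P] (r : P → ℕ)
    (G : P ⥤ AddCommGrpCat.{0}) where
  Λ : P → Type
  [grp : ∀ x, AddCommGroup (Λ x)]
  δ : ∀ x y : P, Λ x →+ Λ y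
  e : ∀ x y : P, y ≤ x → r y = 0 → (Λ y →+ G.obj x)
  delta_support : ∀ x y : P, ¬(y ⋖ x) → δ x y = 0
  delta_fin : ∀ (x : P) (a : Λ x), {y : P | δ x y a ≠ 0}.Finite
  delta_delta : ∀ (x z : P) (a : Λ x), (∑ᶠ y : P, δ y z (δ x y a)) = 0
  exact_pos : ∀ (x : P) (q : ℕ) (a : ∀ y : P, Λ y),
    {y : P | a y ≠ 0}.Finite →
    (∀ y, a y ≠ 0 → y ≤ x ∧ r y = q + 1) →
    (∀ z, (∑ᶠ y : P, δ y z (a y)) = 0) →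
    ∃ b : ∀ y : P, Λ y, {y : P | b y ≠ 0}.Finite ∧
      (∀ y, b y ≠ 0 → y ≤ x ∧ r y = q + 2) ∧ ∀ y, a y = ∑ᶠ w : P, δ w y (b w)
  e_natural : ∀ (x x' y : P) (h : y ≤ x) (h' : x ≤ x') (h0 : r y = 0) (a : Λ y),
    G.map (homOfLE h') (e x y h h0 a) = e x' y (h.trans h') h0 a
  e_surj : ∀ (x : P) (g : G.obj x), ∃ a : ∀ y : P, Λ y,
    {y : P | a y ≠ 0}.Finite ∧ (∀ y, a y ≠ 0 → y ≤ x ∧ r y = 0) ∧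
    (∑ᶠ y : P, if h : y ≤ x ∧ r y = 0 then e x y h.1 h.2 (a y) else 0) = g
  e_ker : ∀ (x : P) (a : ∀ y : P, Λ y), {y : P | a y ≠ 0}.Finite →
    (∀ y, a y ≠ 0 → y ≤ x ∧ r y = 0) →
    ((∑ᶠ y : P, if h : y ≤ x ∧ r y = 0 then e x y h.1 h.2 (a y) else 0) = 0 ↔
      ∃ b : ∀ y : P, Λ y, {y : P | b y ≠ 0}.Finite ∧
        (∀ y, b y ≠ 0 → y ≤ x ∧ r y = 1) ∧ ∀ y, a y = ∑ᶠ w : P, δ w y (b w))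

attribute [instance] CellularForm.grp

/-- The property, for a given `P`-graded differential `ℤ`-module `(Λ, δ)`, of being a
cellular form of `(P, G)`; see `CellularForm` for a description of the fields, the only
difference being that here the realising maps `e` are merely required to exist. -/
structure IsCellularForm (P : Type) [PartialOrder P] (r : P → ℕ)
    (G : P ⥤ AddCommGrpCat.{0}) (Λ : P → Type) [inst : ∀ x, AddCommGroup (Λ x)]
    (δ : ∀ x y : P, Λ x →+ Λ y) : Prop where
  delta_support : ∀ x y : P, ¬(y ⋖ x) → δ x y = 0
  delta_fin : ∀ (x : P) (a : Λ x), {y : P | δ x y a ≠ 0}.Finite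
  delta_delta : ∀ (x z : P) (a : Λ x), (∑ᶠ y : P, δ y z (δ x y a)) = 0
  exact_pos : ∀ (x : P) (q : ℕ) (a : ∀ y : P, Λ y),
    {y : P | a y ≠ 0}.Finite →
    (∀ y, a y ≠ 0 → y ≤ x ∧ r y = q + 1) →
    (∀ z, (∑ᶠ y : P, δ y z (a y)) = 0) →
    ∃ b : ∀ y : P, Λ y, {y : P | b y ≠ 0}.Finite ∧
      (∀ y, b y ≠ 0 → y ≤ x ∧ r y = q + 2) ∧ ∀ y, a y = ∑ᶠ w : P, δ w y (b w)
  hom_zero : ∃ e : ∀ x y : P, y ≤ x → r y = 0 → (Λ y →+ G.obj x),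
    (∀ (x x' y : P) (h : y ≤ x) (h' : x ≤ x') (h0 : r y = 0) (a : Λ y),
      G.map (homOfLE h') (e x y h h0 a) = e x' y (h.trans h') h0 a) ∧
    (∀ (x : P) (g : G.obj x), ∃ a : ∀ y : P, Λ y,
      {y : P | a y ≠ 0}.Finite ∧ (∀ y, a y ≠ 0 → y ≤ x ∧ r y = 0) ∧
      (∑ᶠ y : P, if h : y ≤ x ∧ r y = 0 then e x y h.1 h.2 (a y) else 0) = g) ∧
    (∀ (x : P) (a : ∀ y : P, Λ y), {y : P | a y ≠ 0}.Finite →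
      (∀ y, a y ≠ 0 → y ≤ x ∧ r y = 0) →
      ((∑ᶠ y : P, if h : y ≤ x ∧ r y = 0 then e x y h.1 h.2 (a y) else 0) = 0 ↔
        ∃ b : ∀ y : P, Λ y, {y : P | b y ≠ 0}.Finite ∧
          (∀ y, b y ≠ 0 → y ≤ x ∧ r y = 1) ∧ ∀ y, a y = ∑ᶠ w : P, δ w y (b w)))

/-!
Both `(Λ, ∂)` and the given cellular form `Λ⁰` are determined rank by rank as kernels. In rank `0`
both are `G`. For `r x ≥ 1`, `∂` is injective on the group at `x` (for `Λ⁰` because `Λ⁰_{≤x}` is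
acyclic in degree `r x`), and its image in `⊕_{y⋖x}` is the kernel of `⊕_{y<x} G(y) → G(x)` when
`r x = 1` and the group of cycles when `r x ≥ 2` (for `Λ⁰` because `H₀(Λ⁰_{≤x}) ≅ G(x)`, resp. by
acyclicity in degree `r x - 1`). So, by induction on the rank, the isomorphisms in lower ranks
identify these images and induce an isomorphism `Λ⁰_x ≅ Λ_x` commuting with `∂`; and being a
cellular form is invariant under isomorphisms of graded differential groups.
-/

namespace IsGrading

variable {P : Type} [PartialOrder P] {r : P → ℕ}

theorem rank_lt (hr : IsGrading P r) {x y : P} (h : x < y) : r x < r y := hr.2.2 x y h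

theorem rank_covBy (hr : IsGrading P r) {x y : P} (h : x ⋖ y) : r y = r x + 1 := hr.2.1 x y h

theorem rank_le (hr : IsGrading P r) {x y : P} (h : x ≤ y) : r x ≤ r y := by
  rcases h.lt_or_eq with h | rfl
  exacts [(hr.rank_lt h).le, le_rfl]

theorem eq_of_le_of_rank_le (hr : IsGrading P r) {x y : P} (h : x ≤ y) (h' : r y ≤ r x) :
    x = y :=
  h.eq_of_not_lt fun hlt => (hr.rank_lt hlt).not_ge h'

theorem apply_eq_zero_of_rank_lt (hr : IsGrading P r) {β : P → Type*} [∀ y, Zero (β y)]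
    {b : ∀ y, β y} {x : P} {n : ℕ} (hb : ∀ y, b y ≠ 0 → y ≤ x ∧ r y = n) (hn : r x < n)
    (w : P) : b w = 0 :=
  by_contra fun hw => (hn.trans_le ((hb w hw).2 ▸ hr.rank_le (hb w hw).1)).false

theorem apply_eq_zero_of_ne_of_rank_le (hr : IsGrading P r) {β : P → Type*}
    [∀ y, Zero (β y)] {b : ∀ y, β y} {x : P} {n : ℕ} (hb : ∀ y, b y ≠ 0 → y ≤ x ∧ r y = n)
    (hn : r x ≤ n) {w : P} (hw : w ≠ x) : b w = 0 :=
  by_contra fun hbw => hw (hr.eq_of_le_of_rank_le (hb w hbw).1 ((hb w hbw).2 ▸ hn))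

theorem wellFounded (hr : IsGrading P r) : WellFounded ((· < ·) : P → P → Prop) :=
  Subrelation.wf (fun h => hr.rank_lt h) (InvImage.wf r wellFounded_lt)

end IsGrading

theorem finsum_apply_eq_single {ι : Type*} {β : ι → Type*} [∀ i, AddCommMonoid (β i)]
    {M : Type*} [AddCommMonoid M] (g : ∀ i, β i →+ M) {b : ∀ i, β i} {x : ι}
    (hb : ∀ w, w ≠ x → b w = 0) : ∑ᶠ w, g w (b w) = g x (b x) :=
  finsum_eq_single _ x fun w hw => by rw [hb w hw, map_zero]

theorem finsum_apply_pi_single {ι : Type*} [DecidableEq ι] {β : ι → Type*}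
    [∀ i, AddCommMonoid (β i)] {M : Type*} [AddCommMonoid M] (g : ∀ i, β i →+ M) (x : ι)
    (c : β x) : ∑ᶠ w, g w (Pi.single x c w) = g x c := by
  rw [finsum_apply_eq_single g fun w hw => Pi.single_eq_of_ne hw c, Pi.single_eq_same]

theorem eq_of_pi_single_ne_zero {ι : Type*} [DecidableEq ι] {β : ι → Type*}
    [∀ i, Zero (β i)] {x y : ι} {c : β x} (h : Pi.single x c y ≠ 0) : y = x :=
  by_contra fun hne => h (Pi.single_eq_of_ne hne c)

theorem finite_ne_zero_pi_single {ι : Type*} [DecidableEq ι] {β : ι → Type*}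
    [∀ i, Zero (β i)] (x : ι) (c : β x) : {y | Pi.single x c y ≠ 0}.Finite :=
  (Set.finite_singleton x).subset fun _ => eq_of_pi_single_ne_zero

namespace CellularForm

variable {P : Type} [PartialOrder P] {r : P → ℕ} {G : P ⥤ AddCommGrpCat.{0}}
  (C : CellularForm P r G)

theorem isCellularForm : IsCellularForm P r G C.Λ C.δ :=
  ⟨C.delta_support, C.delta_fin, C.delta_delta, C.exact_pos,
    ⟨C.e, C.e_natural, C.e_surj, C.e_ker⟩⟩

theorem covBy_of_delta_ne_zero {x y : P} {c : C.Λ x} (h : C.δ x y c ≠ 0) : y ⋖ x :=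
  by_contra fun hyx => h (by rw [C.delta_support x y hyx]; rfl)

theorem eq_of_delta_eq (hr : IsGrading P r) {x : P} (hx : 0 < r x) {c c' : C.Λ x}
    (h : ∀ z, z ⋖ x → C.δ x z c = C.δ x z c') : c = c' := by
  rw [← sub_eq_zero]
  have hcyc : ∀ z, ∑ᶠ w, C.δ w z (Pi.single x (c - c') w) = 0 := fun z => by
    rw [finsum_apply_pi_single]
    by_cases hz : z ⋖ x
    · rw [map_sub, h z hz, sub_self]
    · rw [C.delta_support x z hz]; rfl
  obtain ⟨b, -, hb, hsum⟩ := C.exact_pos x (r x - 1) _ (finite_ne_zero_pi_single x _)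
    (fun y hy => by
      obtain rfl := eq_of_pi_single_ne_zero hy
      exact ⟨le_rfl, by omega⟩) hcyc
  simpa [hr.apply_eq_zero_of_rank_lt hb (by omega)] using hsum x

theorem exists_delta_eq_of_cycle (hr : IsGrading P r) {x : P} {q : ℕ} (hx : r x = q + 2)
    {k : ∀ y, C.Λ y} (hkf : {y | k y ≠ 0}.Finite) (hk : ∀ y, k y ≠ 0 → y ⋖ x)
    (hcyc : ∀ w, ∑ᶠ y, C.δ y w (k y) = 0) : ∃ c, ∀ z, k z = C.δ x z c := by
  obtain ⟨b, -, hb, hsum⟩ := C.exact_pos x q k hkf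
    (fun y hy => ⟨(hk y hy).le, by have := hr.rank_covBy (hk y hy); omega⟩) hcyc
  exact ⟨b x, fun z => (hsum z).trans
    (finsum_apply_eq_single _ fun w => hr.apply_eq_zero_of_ne_of_rank_le hb (by omega))⟩

theorem sum_e_eq_sum_map_e {x : P} (hx : r x ≠ 0) (k : ∀ y, C.Λ y) :
    (∑ᶠ y, if h : y ≤ x ∧ r y = 0 then C.e x y h.1 h.2 (k y) else 0) =
      ∑ᶠ y, if h : y < x ∧ r y = 0 then
        G.map (homOfLE h.1.le) (C.e y y le_rfl h.2 (k y)) else 0 := by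
  refine finsum_congr fun y => ?_
  by_cases h : y ≤ x ∧ r y = 0
  · have h' : y < x ∧ r y = 0 := ⟨h.1.lt_of_ne (by rintro rfl; exact hx h.2), h.2⟩
    rw [dif_pos h, dif_pos h', C.e_natural y x y le_rfl h'.1.le h.2]
  · rw [dif_neg h, dif_neg fun h' => h ⟨h'.1.le, h'.2⟩]

theorem sum_map_e_delta_eq_zero (hr : IsGrading P r) {x : P} (hx : r x = 1) (c : C.Λ x) :
    (∑ᶠ y, if h : y < x ∧ r y = 0 then
      G.map (homOfLE h.1.le) (C.e y y le_rfl h.2 (C.δ x y c)) else 0) = 0 := by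
  rw [← C.sum_e_eq_sum_map_e (by omega)]
  refine (C.e_ker x _ (C.delta_fin x c) (fun y hy => ?_)).2
    ⟨Pi.single x c, finite_ne_zero_pi_single x c, fun y hy => ?_, fun y => ?_⟩
  · have hyx := C.covBy_of_delta_ne_zero hy
    exact ⟨hyx.le, by have := hr.rank_covBy hyx; omega⟩
  · obtain rfl := eq_of_pi_single_ne_zero hy
    exact ⟨le_rfl, hx⟩
  · rw [finsum_apply_pi_single]

theorem exists_delta_eq_of_sum_map_e_eq_zero (hr : IsGrading P r) {x : P} (hx : r x = 1)
    {k : ∀ y, C.Λ y} (hkf : {y | k y ≠ 0}.Finite) (hk : ∀ y, k y ≠ 0 → y ⋖ x)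
    (hsum : (∑ᶠ y, if h : y < x ∧ r y = 0 then
      G.map (homOfLE h.1.le) (C.e y y le_rfl h.2 (k y)) else 0) = 0) :
    ∃ c, ∀ z, k z = C.δ x z c := by
  rw [← C.sum_e_eq_sum_map_e (by omega)] at hsum
  obtain ⟨b, -, hb, hbk⟩ := (C.e_ker x k hkf
    (fun y hy => ⟨(hk y hy).le, by have := hr.rank_covBy (hk y hy); omega⟩)).1 hsum
  exact ⟨b x, fun z => (hbk z).trans
    (finsum_apply_eq_single _ fun w => hr.apply_eq_zero_of_ne_of_rank_le hb (by omega))⟩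

theorem sum_e_eq_e_self (hr : IsGrading P r) {x : P} (hx : r x = 0) (a : ∀ y, C.Λ y) :
    (∑ᶠ y, if h : y ≤ x ∧ r y = 0 then C.e x y h.1 h.2 (a y) else 0) =
      C.e x x le_rfl hx (a x) := by
  rw [finsum_eq_single _ x fun y hy => dif_neg fun h =>
    hy (hr.eq_of_le_of_rank_le h.1 (by have := h.2; omega)), dif_pos ⟨le_rfl, hx⟩]

theorem e_self_bijective (hr : IsGrading P r) {x : P} (hx : r x = 0) :
    Function.Bijective (C.e x x le_rfl hx) := by
  refine ⟨(injective_iff_map_eq_zero _).2 fun c hc => ?_, fun g => ?_⟩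
  · have hsum := C.sum_e_eq_e_self hr hx (Pi.single x c)
    rw [Pi.single_eq_same, hc] at hsum
    obtain ⟨b, -, hb, hbc⟩ := (C.e_ker x _ (finite_ne_zero_pi_single x c) fun y hy => by
      obtain rfl := eq_of_pi_single_ne_zero hy
      exact ⟨le_rfl, hx⟩).1 hsum
    simpa [hr.apply_eq_zero_of_rank_lt hb (by omega)] using hbc x
  · obtain ⟨a, -, -, ha⟩ := C.e_surj x g
    exact ⟨a x, (C.sum_e_eq_e_self hr hx a).symm.trans ha⟩

end CellularForm

section Transport

variable {P : Type} {Λ Λ' : P → Type} [∀ x, AddCommGroup (Λ x)] [∀ x, AddCommGroup (Λ' x)]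
  {δ : ∀ x y : P, Λ x →+ Λ y} {δ' : ∀ x y : P, Λ' x →+ Λ' y}

theorem exists_boundary_iff_of_addEquiv (φ : ∀ x, Λ x ≃+ Λ' x)
    (hφ : ∀ x y a, δ' x y (φ x a) = φ y (δ x y a)) (S : P → Prop) (a : ∀ y, Λ y) :
    (∃ b : ∀ y, Λ y, {y | b y ≠ 0}.Finite ∧ (∀ y, b y ≠ 0 → S y) ∧
        ∀ y, a y = ∑ᶠ w, δ w y (b w)) ↔
      ∃ b : ∀ y, Λ' y, {y | b y ≠ 0}.Finite ∧ (∀ y, b y ≠ 0 → S y) ∧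
        ∀ y, φ y (a y) = ∑ᶠ w, δ' w y (b w) := by
  constructor
  · rintro ⟨b, hbf, hbS, hab⟩
    refine ⟨fun y => φ y (b y), by simpa using hbf, by simpa using hbS, fun y => ?_⟩
    simp only [hφ, hab y, AddEquiv.map_finsum]
  · rintro ⟨b, hbf, hbS, hab⟩
    refine ⟨fun y => (φ y).symm (b y), by simpa using hbf, by simpa using hbS,
      fun y => (φ y).injective ?_⟩
    simp only [hab y, AddEquiv.map_finsum, ← hφ, AddEquiv.apply_symm_apply]

variable [PartialOrder P] {r : P → ℕ} {G : P ⥤ AddCommGrpCat.{0}}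

theorem IsCellularForm.of_addEquiv (h : IsCellularForm P r G Λ δ) (φ : ∀ x, Λ x ≃+ Λ' x)
    (hφ : ∀ x y a, δ' x y (φ x a) = φ y (δ x y a)) : IsCellularForm P r G Λ' δ' := by
  have hδ' : ∀ x y a, δ' x y a = φ y (δ x y ((φ x).symm a)) := fun x y a => by
    rw [← hφ, AddEquiv.apply_symm_apply]
  refine ⟨fun x y hxy => ?_, fun x a => ?_, fun x z a => ?_, fun x q a hf hS hcyc => ?_, ?_⟩
  · ext a
    simp [hδ', h.delta_support x y hxy]
  · simpa [hδ'] using h.delta_fin x ((φ x).symm a)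
  · simp [hδ', ← AddEquiv.map_finsum, h.delta_delta]
  · have hcyc' : ∀ z, ∑ᶠ y, δ y z ((φ y).symm (a y)) = 0 := fun z => by
      simpa [hδ', ← AddEquiv.map_finsum] using hcyc z
    simpa using (exists_boundary_iff_of_addEquiv φ hφ _ _).1
      (h.exact_pos x q _ (by simpa using hf) (by simpa using hS) hcyc')
  · obtain ⟨e, he_nat, he_surj, he_ker⟩ := h.hom_zero
    refine ⟨fun x y hyx hy => (e x y hyx hy).comp (φ y).symm.toAddMonoidHom,
      fun x x' y hyx hxx' hy a => he_nat x x' y hyx hxx' hy _, fun x g => ?_,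
      fun x a hf hS => ?_⟩
    · obtain ⟨a, hf, hS, ha⟩ := he_surj x g
      exact ⟨fun y => φ y (a y), by simpa using hf, by simpa using hS, by simpa using ha⟩
    · simpa using he_ker x (fun y => (φ y).symm (a y)) (by simpa using hf) (by simpa using hS)
        |>.trans (exists_boundary_iff_of_addEquiv φ hφ _ _)

end Transport

section Comparison

variable {P : Type} {Λ₀ Λ : P → Type} [∀ x, AddCommGroup (Λ₀ x)] [∀ x, AddCommGroup (Λ x)]

structure IsChainIsoAt (δ₀ : ∀ x y : P, Λ₀ x →+ Λ₀ y) (δ : ∀ x y : P, Λ x →+ Λ y)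
    (f : ∀ x, Λ₀ x → Λ x) (x : P) : Prop where
  map_add : ∀ c c', f x (c + c') = f x c + f x c'
  bijective : Function.Bijective (f x)
  delta_comm : ∀ z c, δ x z (f x c) = f z (δ₀ x z c)

namespace IsChainIsoAt

variable {δ₀ : ∀ x y : P, Λ₀ x →+ Λ₀ y} {δ : ∀ x y : P, Λ x →+ Λ y} {f : ∀ x, Λ₀ x → Λ x}
  {x : P}

noncomputable def addEquiv (h : IsChainIsoAt δ₀ δ f x) : Λ₀ x ≃+ Λ x :=
  AddEquiv.ofBijective (AddMonoidHom.mk' (f x) h.map_add) h.bijective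

theorem map_eq_zero_iff (h : IsChainIsoAt δ₀ δ f x) {c : Λ₀ x} : f x c = 0 ↔ c = 0 :=
  h.addEquiv.map_eq_zero_iff

theorem map_finsum (h : IsChainIsoAt δ₀ δ f x) {ι : Type*} (g : ι → Λ₀ x) :
    f x (∑ᶠ i, g i) = ∑ᶠ i, f x (g i) :=
  h.addEquiv.map_finsum g

end IsChainIsoAt

variable [PartialOrder P]

/-- The hypotheses of the recognition criterion on `(Λ, ∂)`; condition (1) is realised by `e0`. -/
structure IsCellularCandidate (r : P → ℕ) (G : P ⥤ AddCommGrpCat.{0})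
    (δ : ∀ x y : P, Λ x →+ Λ y) (e0 : ∀ x : P, r x = 0 → (Λ x ≃+ G.obj x)) : Prop where
  delta_support : ∀ x y : P, ¬(y ⋖ x) → δ x y = 0
  delta_fin : ∀ (x : P) (a : Λ x), {y : P | δ x y a ≠ 0}.Finite
  delta_delta : ∀ (x z : P) (a : Λ x), (∑ᶠ y : P, δ y z (δ x y a)) = 0
  eq_of_delta_eq : ∀ x : P, 0 < r x → ∀ a a' : Λ x, (∀ y, δ x y a = δ x y a') → a = a'
  sum_map_delta_eq_zero : ∀ x : P, r x = 1 → ∀ a : Λ x,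
    (∑ᶠ y : P, if h : y < x ∧ r y = 0 then
      G.map (homOfLE h.1.le) (e0 y h.2 (δ x y a)) else 0) = 0
  exists_delta_of_sum_map_eq_zero : ∀ x : P, r x = 1 → ∀ g : ∀ y : P, G.obj y,
    {y : P | g y ≠ 0}.Finite → (∀ y, g y ≠ 0 → y < x) →
    (∑ᶠ y : P, if h : y < x then G.map (homOfLE h.le) (g y) else 0) = 0 →
    ∃ a : Λ x, ∀ (y : P) (_ : y < x) (h0 : r y = 0), e0 y h0 (δ x y a) = g y
  exists_delta_of_cycle : ∀ x : P, 1 < r x → ∀ a : ∀ y : P, Λ y, {y : P | a y ≠ 0}.Finite →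
    (∀ y, a y ≠ 0 → y ⋖ x) → (∀ z, (∑ᶠ y : P, δ y z (a y)) = 0) →
    ∃ b : Λ x, ∀ y, a y = δ x y b

variable {r : P → ℕ} {G : P ⥤ AddCommGrpCat.{0}}

/-- The comparison map `C.Λ x → Λ x`, built rank by rank: through `G(x)` in rank `0`, and above
as a chosen `∂`-lift of the image of `∂c` (one exists, by induction on the rank). The `c = 0`
branch gives `comparison x 0 = 0` before anything is known about the lifts. -/
noncomputable def comparison (hr : IsGrading P r) (C : CellularForm P r G)
    (δ : ∀ x y : P, Λ x →+ Λ y) (e0 : ∀ x : P, r x = 0 → (Λ x ≃+ G.obj x)) (x : P)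
    (c : C.Λ x) : Λ x :=
  if h0 : r x = 0 then (e0 x h0).symm (C.e x x le_rfl h0 c)
  else if c = 0 then 0
  else if h : ∃ b : Λ x, ∀ z, z ⋖ x → δ x z b = comparison hr C δ e0 z (C.δ x z c) then h.choose
  else 0
termination_by r x
decreasing_by exact (hr.rank_covBy ‹_›).symm ▸ Nat.lt_succ_self _

variable (hr : IsGrading P r) (C : CellularForm P r G) {δ : ∀ x y : P, Λ x →+ Λ y}
  {e0 : ∀ x : P, r x = 0 → (Λ x ≃+ G.obj x)}

local notation "φ" => comparison hr C δ e0

theorem comparison_of_rank_eq_zero {x : P} (hx : r x = 0) (c : C.Λ x) :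
    φ x c = (e0 x hx).symm (C.e x x le_rfl hx c) := by
  rw [comparison, dif_pos hx]

theorem e0_comparison {x : P} (hx : r x = 0) (c : C.Λ x) :
    e0 x hx (φ x c) = C.e x x le_rfl hx c := by
  rw [comparison_of_rank_eq_zero, AddEquiv.apply_symm_apply]

theorem comparison_zero (x : P) : φ x 0 = 0 := by
  rw [comparison]
  split_ifs <;> simp_all

theorem delta_comparison_of_exists {x : P} (hx : r x ≠ 0) {c : C.Λ x}
    (h : ∃ b : Λ x, ∀ z, δ x z b = φ z (C.δ x z c)) {z : P} (hz : z ⋖ x) :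
    δ x z (φ x c) = φ z (C.δ x z c) := by
  by_cases hc : c = 0
  · simp [hc, comparison_zero]
  · have h' : ∃ b : Λ x, ∀ z, z ⋖ x → δ x z b = φ z (C.δ x z c) :=
      h.imp fun b hb z _ => hb z
    rw [comparison, dif_neg hx, if_neg hc, dif_pos h']
    exact h'.choose_spec z hz

theorem isChainIsoAt_comparison_of_rank_eq_zero (H : IsCellularCandidate r G δ e0) {x : P}
    (hx : r x = 0) : IsChainIsoAt C.δ δ φ x := by
  have hcov : ∀ z, ¬z ⋖ x := fun z hz => by
    have := hr.rank_covBy hz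
    omega
  refine ⟨fun c c' => by simp [comparison_of_rank_eq_zero hr C hx], ?_, fun z c => ?_⟩
  · rw [funext (comparison_of_rank_eq_zero hr C (δ := δ) hx)]
    exact (e0 x hx).symm.bijective.comp (C.e_self_bijective hr hx)
  · rw [H.delta_support x z (hcov z), C.delta_support x z (hcov z)]
    simp [comparison_zero]

theorem finsum_delta_comparison_eq_zero_iff {x : P} (IH : ∀ y < x, IsChainIsoAt C.δ δ φ y)
    {k : ∀ y, C.Λ y} (hk : ∀ y, k y ≠ 0 → y ⋖ x) (w : P) :
    ∑ᶠ y, δ y w (φ y (k y)) = 0 ↔ ∑ᶠ y, C.δ y w (k y) = 0 := by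
  have hterm : ∀ y, δ y w (φ y (k y)) = φ w (C.δ y w (k y)) := fun y => by
    by_cases hy : k y = 0
    · rw [hy, comparison_zero, map_zero, map_zero, comparison_zero]
    · exact (IH y (hk y hy).lt).delta_comm w (k y)
  rw [finsum_congr hterm]
  by_cases hw : w < x
  · rw [← (IH w hw).map_finsum, (IH w hw).map_eq_zero_iff]
  · have : ∀ y, C.δ y w (k y) = 0 := fun y => by
      by_cases hy : k y = 0
      · rw [hy, map_zero]
      · rw [C.delta_support y w fun hwy => hw (hwy.lt.trans (hk y hy).lt)]
        rfl
    simp [this, comparison_zero]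

theorem exists_comparison_eq_delta (H : IsCellularCandidate r G δ e0) {x : P}
    (IH : ∀ y < x, IsChainIsoAt C.δ δ φ y) (b : Λ x) :
    ∃ k : ∀ y, C.Λ y, {y | k y ≠ 0}.Finite ∧ (∀ y, k y ≠ 0 → y ⋖ x) ∧
      ∀ y, φ y (k y) = δ x y b := by
  have : ∀ y, ∃ c : C.Λ y, (c ≠ 0 → y ⋖ x) ∧ φ y c = δ x y b := fun y => by
    by_cases hy : y ⋖ x
    · obtain ⟨c, hc⟩ := (IH y hy.lt).bijective.2 (δ x y b)
      exact ⟨c, fun _ => hy, hc⟩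
    · exact ⟨0, fun h => (h rfl).elim, by rw [comparison_zero, H.delta_support x y hy]; rfl⟩
  choose k hk_cov hk using this
  refine ⟨k, (H.delta_fin x b).subset fun y hy => ?_, hk_cov, hk⟩
  show δ x y b ≠ 0
  rw [← hk y]
  exact (IH y (hk_cov y hy).lt).map_eq_zero_iff.not.2 hy

theorem exists_delta_eq_comparison_of_rank_eq_one (H : IsCellularCandidate r G δ e0) {x : P}
    (hx : r x = 1) (c : C.Λ x) : ∃ b : Λ x, ∀ z, δ x z b = φ z (C.δ x z c) := by
  let g : ∀ y, G.obj y := fun y => if h : r y = 0 then C.e y y le_rfl h (C.δ x y c) else 0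
  have hg : ∀ y, g y ≠ 0 → C.δ x y c ≠ 0 := fun y hy hc => hy (by simp [g, hc])
  have hsum : (∑ᶠ y, if h : y < x then G.map (homOfLE h.le) (g y) else 0) = 0 := by
    refine Eq.trans (finsum_congr fun y => ?_) (C.sum_map_e_delta_eq_zero hr hx c)
    by_cases hy : y < x <;> by_cases hy0 : r y = 0 <;> simp [g, hy, hy0]
  obtain ⟨b, hb⟩ := H.exists_delta_of_sum_map_eq_zero x hx g
    ((C.delta_fin x c).subset fun y hy => hg y hy)
    (fun y hy => (C.covBy_of_delta_ne_zero (hg y hy)).lt) hsum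
  refine ⟨b, fun z => ?_⟩
  by_cases hz : z ⋖ x
  · have hz0 : r z = 0 := by
      have := hr.rank_covBy hz
      omega
    apply (e0 z hz0).injective
    rw [hb z hz.lt hz0, e0_comparison]
    simp [g, hz0]
  · rw [H.delta_support x z hz, C.delta_support x z hz]
    simp [comparison_zero]

theorem exists_comparison_delta_eq_of_rank_eq_one (H : IsCellularCandidate r G δ e0) {x : P}
    (IH : ∀ y < x, IsChainIsoAt C.δ δ φ y) (hx : r x = 1) (b : Λ x) :
    ∃ c : C.Λ x, ∀ z, φ z (C.δ x z c) = δ x z b := by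
  obtain ⟨k, hkf, hk, hφk⟩ := exists_comparison_eq_delta hr C H IH b
  have hsum : (∑ᶠ y, if h : y < x ∧ r y = 0 then
      G.map (homOfLE h.1.le) (C.e y y le_rfl h.2 (k y)) else 0) = 0 := by
    refine Eq.trans (finsum_congr fun y => ?_) (H.sum_map_delta_eq_zero x hx b)
    split_ifs with hy
    · rw [← hφk, e0_comparison]
    · rfl
  obtain ⟨c, hc⟩ := C.exists_delta_eq_of_sum_map_e_eq_zero hr hx hkf hk hsum
  exact ⟨c, fun z => by rw [← hc, hφk]⟩

theorem exists_delta_eq_comparison_of_two_le_rank (H : IsCellularCandidate r G δ e0) {x : P}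
    (IH : ∀ y < x, IsChainIsoAt C.δ δ φ y) (hx : 2 ≤ r x) (c : C.Λ x) :
    ∃ b : Λ x, ∀ z, δ x z b = φ z (C.δ x z c) := by
  have hk : ∀ y, C.δ x y c ≠ 0 → y ⋖ x := fun y => C.covBy_of_delta_ne_zero
  have hne : ∀ y, φ y (C.δ x y c) ≠ 0 → C.δ x y c ≠ 0 := fun y hy hc =>
    hy (by rw [hc, comparison_zero])
  refine (H.exists_delta_of_cycle x hx _ ((C.delta_fin x c).subset fun y hy => hne y hy)
    (fun y hy => hk y (hne y hy)) fun w => ?_).imp fun b hb z => (hb z).symm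
  exact (finsum_delta_comparison_eq_zero_iff hr C IH hk w).2 (C.delta_delta x w c)

theorem exists_comparison_delta_eq_of_two_le_rank (H : IsCellularCandidate r G δ e0) {x : P}
    (IH : ∀ y < x, IsChainIsoAt C.δ δ φ y) (hx : 2 ≤ r x) (b : Λ x) :
    ∃ c : C.Λ x, ∀ z, φ z (C.δ x z c) = δ x z b := by
  obtain ⟨k, hkf, hk, hφk⟩ := exists_comparison_eq_delta hr C H IH b
  have hcyc : ∀ w, ∑ᶠ y, C.δ y w (k y) = 0 := fun w =>
    (finsum_delta_comparison_eq_zero_iff hr C IH hk w).1 (by simpa [hφk] using H.delta_delta x w b)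
  obtain ⟨c, hc⟩ := C.exists_delta_eq_of_cycle hr (q := r x - 2) (by omega) hkf hk hcyc
  exact ⟨c, fun z => by rw [← hc, hφk]⟩

theorem isChainIsoAt_comparison_of_forall_lt (H : IsCellularCandidate r G δ e0) {x : P}
    (IH : ∀ y < x, IsChainIsoAt C.δ δ φ y) (hx : 0 < r x) : IsChainIsoAt C.δ δ φ x := by
  have hlift : ∀ c : C.Λ x, ∃ b : Λ x, ∀ z, δ x z b = φ z (C.δ x z c) :=
    if hx1 : r x = 1 then exists_delta_eq_comparison_of_rank_eq_one hr C H hx1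
    else exists_delta_eq_comparison_of_two_le_rank hr C H IH (by omega)
  have hdesc : ∀ b : Λ x, ∃ c : C.Λ x, ∀ z, φ z (C.δ x z c) = δ x z b :=
    if hx1 : r x = 1 then exists_comparison_delta_eq_of_rank_eq_one hr C H IH hx1
    else exists_comparison_delta_eq_of_two_le_rank hr C H IH (by omega)
  have hcomm : ∀ z c, δ x z (φ x c) = φ z (C.δ x z c) := fun z c => by
    by_cases hz : z ⋖ x
    · exact delta_comparison_of_exists hr C hx.ne' (hlift c) hz
    · rw [H.delta_support x z hz, C.delta_support x z hz]
      simp [comparison_zero]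
  refine ⟨fun c c' => H.eq_of_delta_eq x hx _ _ fun z => ?_, ⟨fun c c' h => ?_, fun b => ?_⟩,
    hcomm⟩
  · by_cases hz : z ⋖ x
    · rw [map_add, hcomm, hcomm, hcomm, map_add, (IH z hz.lt).map_add]
    · simp [H.delta_support x z hz]
  · refine C.eq_of_delta_eq hr hx fun z hz => (IH z hz.lt).bijective.1 ?_
    rw [← hcomm, ← hcomm, h]
  · obtain ⟨c, hc⟩ := hdesc b
    exact ⟨c, H.eq_of_delta_eq x hx _ _ fun z => by rw [hcomm, hc]⟩

theorem isChainIsoAt_comparison (H : IsCellularCandidate r G δ e0) (x : P) :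
    IsChainIsoAt C.δ δ φ x :=
  hr.wellFounded.induction x fun x IH =>
    if hx : r x = 0 then isChainIsoAt_comparison_of_rank_eq_zero hr C H hx
    else isChainIsoAt_comparison_of_forall_lt hr C H IH (Nat.pos_of_ne_zero hx)

end Comparison

/-- **Statement 10 (recognition of cellular forms).**  Let `(P, r)` be a graded poset and
`G` a copresheaf on `P` such that `(P,G)` admits a cellular form.  Let `Λ` be a
`P`-graded `ℤ`-module with maps `∂` whose components `δ x y` vanish unless `y ⋖ x`, with
`∂∂ = 0`, and such that:
(1) `Λ_{x₀} = G(x₀)` for rank-`0` elements (via given identifications `e0`);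
(2) for rank-`1` elements `x₁`, `Λ_{x₁} = ker(⊕_{y<x₁} G(y) → G(x₁))` with `∂` the
inclusion: the family `(δ x₁ y)_y` is injective, lands in the kernel, and reaches every
element of the kernel;
(3) for `r(x) > 1` the sequence `0 → Λ_x → ⊕_{y⋖x} Λ_y → ⊕_{y<x, r(y)=r(x)-2} Λ_y` is
exact.
Then `(Λ, ∂)` is a cellular form of `(P, G)`. -/
theorem statement10 (P : Type) [PartialOrder P] (r : P → ℕ) (hr : IsGrading P r)
    (G : P ⥤ AddCommGrpCat.{0}) (C₀ : CellularForm P r G)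
    (Λ : P → Type) [inst : ∀ x, AddCommGroup (Λ x)] (δ : ∀ x y : P, Λ x →+ Λ y)
    (hsupp : ∀ x y : P, ¬(y ⋖ x) → δ x y = 0)
    (hfin : ∀ (x : P) (a : Λ x), {y : P | δ x y a ≠ 0}.Finite)
    (hdd : ∀ (x z : P) (a : Λ x), (∑ᶠ y : P, δ y z (δ x y a)) = 0)
    (e0 : ∀ x : P, r x = 0 → (Λ x ≃+ G.obj x))
    (h2a : ∀ x : P, r x = 1 → ∀ a a' : Λ x, (∀ y, δ x y a = δ x y a') → a = a')
    (h2b : ∀ x : P, r x = 1 → ∀ a : Λ x,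
      (∑ᶠ y : P, if h : y < x ∧ r y = 0 then
        G.map (homOfLE h.1.le) (e0 y h.2 (δ x y a)) else 0) = 0)
    (h2c : ∀ x : P, r x = 1 → ∀ g : ∀ y : P, G.obj y, {y : P | g y ≠ 0}.Finite →
      (∀ y, g y ≠ 0 → y < x) →
      (∑ᶠ y : P, if h : y < x then G.map (homOfLE h.le) (g y) else 0) = 0 →
      ∃ a : Λ x, ∀ (y : P) (_ : y < x) (h0 : r y = 0), e0 y h0 (δ x y a) = g y)
    (h3a : ∀ x : P, 1 < r x → ∀ a a' : Λ x, (∀ y, δ x y a = δ x y a') → a = a')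
    (h3b : ∀ x : P, 1 < r x → ∀ a : ∀ y : P, Λ y, {y : P | a y ≠ 0}.Finite →
      (∀ y, a y ≠ 0 → y ⋖ x) → (∀ z, (∑ᶠ y : P, δ y z (a y)) = 0) →
      ∃ b : Λ x, ∀ y, a y = δ x y b) :
    IsCellularForm P r G Λ δ := by
  have H : IsCellularCandidate r G δ e0 :=
    { delta_support := hsupp, delta_fin := hfin, delta_delta := hdd
      eq_of_delta_eq := fun x hx => if hx1 : r x = 1 then h2a x hx1 else h3a x (by omega)
      sum_map_delta_eq_zero := h2b
      exists_delta_of_sum_map_eq_zero := h2c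
      exists_delta_of_cycle := h3b }
  have hφ := isChainIsoAt_comparison hr C₀ H
  exact C₀.isCellularForm.of_addEquiv (fun x => (hφ x).addEquiv) fun x => (hφ x).delta_comm
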